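/- arXiv:1304.2429 — 3 statements merged into one kernel-verified Lean document; each statement's English description precedes it below -/
import Mathlib

section
/- Let T be a tree with t vertices and suppose a graph G has vertex set partitioned into parts V_1,...,V_t of equal size ν, with edges only between pairs (V_i,V_j) where (i,j) ∈ E(T). Suppose for each edge (i,j) of T, the bipartite graph between V_i and V_j contains a family of s pairwise edge-disjoint perfect matchings. Then G contains s pairwise edge-disjoint T-factors, covering in total s·ν·(t-1) edges. -/
/-!
Root the tree `T` at some vertex `r` and, for the `k`-th family, compose the `k`-th matchings
along the path from `r` to each vertex `i`, obtaining a permutation `ψ k i` of `Fin ν` with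
`ψ k j = M i j k * ψ k i` for every tree edge `ij` (a tree carries no cycles along which this could
fail). The `c`-th copy of `T` in the `k`-th factor is then `i ↦ (i, ψ k i c)`. An edge of that copy
over the tree edge `ij` is an edge of the `k`-th matching between `V_i` and `V_j`, so it determines
`k` (the matchings are edge-disjoint) and then `c` (as `ψ k i` is injective).
-/

open SimpleGraph Finset

namespace SimpleGraph

variable {V α : Type*} {G : SimpleGraph V}

/-- The product of the edge labels `M u x` along a walk, the last edge leftmost. -/
def Walk.transport [Monoid α] (M : V → V → α) : ∀ {u v : V}, G.Walk u v → α
  | _, _, .nil => 1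
  | u, _, .cons (v := x) _ p => transport M p * M u x

theorem Walk.transport_concat [Monoid α] (M : V → V → α) {u v w : V} (p : G.Walk u v)
    (h : G.Adj v w) : (p.concat h).transport M = M v w * p.transport M := by
  induction p with
  | nil => simp [Walk.concat, transport]
  | cons _ p ih => simp [Walk.concat_cons, transport, ih, mul_assoc]

theorem IsTree.eq_concat_or_eq_concat (hG : G.IsTree) {r i j : V} (h : G.Adj i j)
    {p : G.Walk r i} {q : G.Walk r j} (hp : p.IsPath) (hq : q.IsPath) :
    q = p.concat h ∨ p = q.concat h.symm := by
  classical
  by_cases hj : j ∈ p.support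
  · right
    have htake : p.takeUntil j hj = q := (hG.existsUnique_path r j).unique (hp.takeUntil hj) hq
    have hdrop : p.dropUntil j hj = Walk.cons h.symm Walk.nil :=
      (hG.existsUnique_path j i).unique (hp.dropUntil hj) (by simp [h.ne'])
    rw [← p.take_spec hj, htake, hdrop, Walk.concat_eq_append]
  · left
    exact (hG.existsUnique_path r j).unique hq (hp.concat hj h)

theorem IsTree.exists_potential [Group α] (hG : G.IsTree) (M : V → V → α)
    (hM : ∀ i j, G.Adj i j → M j i = (M i j)⁻¹) :
    ∃ ψ : V → α, ∀ i j, G.Adj i j → ψ j = M i j * ψ i := by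
  obtain ⟨r⟩ := hG.connected.nonempty
  choose P hP _ using hG.existsUnique_path r
  refine ⟨fun i => (P i).transport M, fun i j h => ?_⟩
  change (P j).transport M = M i j * (P i).transport M
  rcases hG.eq_concat_or_eq_concat h (hP i) (hP j) with hPj | hPi
  · rw [hPj, Walk.transport_concat]
  · rw [hPi, Walk.transport_concat, hM i j h, mul_inv_cancel_left]

end SimpleGraph

section TreeFactor

variable {ι V β : Type*} {T : SimpleGraph V}

def treeFactor (ψ : ι → V → Equiv.Perm β) (k : ι) (c : β) (i : V) : V × β := (i, ψ k i c)

theorem treeFactor_bijective (ψ : ι → V → Equiv.Perm β) (k : ι) :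
    Function.Bijective fun p : β × V => treeFactor ψ k p.1 p.2 :=
  ((Equiv.prodComm β V).trans (Equiv.prodShear (Equiv.refl V) (ψ k))).bijective

variable {ψ : ι → V → Equiv.Perm β} {M : V → V → ι → Equiv.Perm β}

theorem treeFactor_adj {G : SimpleGraph (V × β)}
    (hψ : ∀ k i j, T.Adj i j → ψ k j = M i j k * ψ k i)
    (hM : ∀ i j k a, T.Adj i j → G.Adj (i, a) (j, M i j k a)) {i j : V} (h : T.Adj i j)
    (k : ι) (c : β) : G.Adj (treeFactor ψ k c i) (treeFactor ψ k c j) := by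
  simpa [treeFactor, hψ k i j h] using hM i j k (ψ k i c) h

theorem eq_and_eq_of_treeFactor_apply_eq (hψ : ∀ k i j, T.Adj i j → ψ k j = M i j k * ψ k i)
    (hdisj : ∀ i j k k' a, T.Adj i j → k ≠ k' → M i j k a ≠ M i j k' a)
    {i j : V} (h : T.Adj i j) {k k' : ι} {c c' : β}
    (hi : ψ k i c = ψ k' i c') (hj : ψ k j c = ψ k' j c') : k = k' ∧ c = c' := by
  have hk : k = k' := by
    by_contra hk
    refine hdisj i j k k' (ψ k i c) h hk ?_
    calc M i j k (ψ k i c) = ψ k j c := by rw [hψ k i j h, Equiv.Perm.mul_apply]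
      _ = ψ k' j c' := hj
      _ = M i j k' (ψ k i c) := by rw [hψ k' i j h, Equiv.Perm.mul_apply, hi]
  subst hk
  exact ⟨rfl, (ψ k i).injective hi⟩

theorem eq_of_treeFactor_edge_eq (hψ : ∀ k i j, T.Adj i j → ψ k j = M i j k * ψ k i)
    (hdisj : ∀ i j k k' a, T.Adj i j → k ≠ k' → M i j k a ≠ M i j k' a)
    {i j i' j' : V} (h : T.Adj i j) {k k' : ι} {c c' : β}
    (he : s(treeFactor ψ k c i, treeFactor ψ k c j) = s(treeFactor ψ k' c' i', treeFactor ψ k' c' j')) :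
    k = k' ∧ c = c' ∧ s(i, j) = s(i', j') := by
  simp only [treeFactor, Sym2.eq_iff, Prod.mk.injEq] at he
  rcases he with ⟨⟨rfl, hi⟩, rfl, hj⟩ | ⟨⟨rfl, hi⟩, rfl, hj⟩ <;>
    obtain ⟨rfl, rfl⟩ := eq_and_eq_of_treeFactor_apply_eq hψ hdisj h hi hj
  exacts [⟨rfl, rfl, rfl⟩, ⟨rfl, rfl, Sym2.eq_swap⟩]

theorem image_filter_adj_eq_product_edgeFinset [Fintype ι] [Fintype β] [DecidableEq ι]
    [DecidableEq β] [Fintype V] [DecidableEq V] [DecidableRel T.Adj] :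
    (univ.filter fun x : ι × β × V × V => T.Adj x.2.2.1 x.2.2.2).image
        (fun x => (x.1, x.2.1, s(x.2.2.1, x.2.2.2)))
      = univ ×ˢ univ ×ˢ T.edgeFinset := by
  ext ⟨k, c, e⟩
  induction e using Sym2.ind with
  | h i j =>
    simp only [mem_image, mem_filter, mem_univ, true_and, mem_product, mem_edgeFinset,
      mem_edgeSet, Prod.mk.injEq, Prod.exists]
    constructor
    · rintro ⟨k, c, i', j', h, rfl, rfl, he⟩
      rw [← mem_edgeSet, ← he]
      exact h
    · exact fun h => ⟨k, c, i, j, h, rfl, rfl, rfl⟩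

theorem card_image_treeFactor_edges [Fintype ι] [Fintype β] [Fintype V] [DecidableEq ι]
    [DecidableEq β] [DecidableEq V] [DecidableRel T.Adj]
    (hψ : ∀ k i j, T.Adj i j → ψ k j = M i j k * ψ k i)
    (hdisj : ∀ i j k k' a, T.Adj i j → k ≠ k' → M i j k a ≠ M i j k' a) :
    ((univ.filter fun x : ι × β × V × V => T.Adj x.2.2.1 x.2.2.2).image fun x =>
        s(treeFactor ψ x.1 x.2.1 x.2.2.1, treeFactor ψ x.1 x.2.1 x.2.2.2)).card
      = Fintype.card ι * Fintype.card β * #T.edgeFinset := by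
  have hfactor : (fun x : ι × β × V × V =>
        s(treeFactor ψ x.1 x.2.1 x.2.2.1, treeFactor ψ x.1 x.2.1 x.2.2.2))
      = (fun x : ι × β × Sym2 V => x.2.2.map (treeFactor ψ x.1 x.2.1)) ∘
          (fun x => (x.1, x.2.1, s(x.2.2.1, x.2.2.2))) := by
    ext1 x
    simp
  rw [hfactor, ← image_image, image_filter_adj_eq_product_edgeFinset,
    card_image_of_injOn, card_product, card_product, card_univ, card_univ, mul_assoc]
  rintro ⟨k, c, e⟩ he ⟨k', c', e'⟩ - heq
  induction e using Sym2.ind with | h i j => ?_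
  induction e' using Sym2.ind with | h i' j' => ?_
  simp only [coe_product, coe_univ, Set.mem_prod, Set.mem_univ, true_and, mem_coe,
    mem_edgeFinset, mem_edgeSet] at he
  simp only [Sym2.map_mk] at heq
  obtain ⟨rfl, rfl, hij⟩ := eq_of_treeFactor_edge_eq hψ hdisj he heq
  rw [hij]

end TreeFactor

theorem stmt_2_general (t ν s : ℕ) (T : SimpleGraph (Fin t)) [DecidableRel T.Adj]
    (hT : T.IsTree)
    (G : SimpleGraph (Fin t × Fin ν))
    (M : Fin t → Fin t → Fin s → (Fin ν ≃ Fin ν))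
    (hsymm : ∀ (i j : Fin t) (k : Fin s), M j i k = (M i j k).symm)
    (hmatch : ∀ (i j : Fin t) (k : Fin s) (a : Fin ν),
      T.Adj i j → G.Adj (i, a) (j, M i j k a))
    (hdisj : ∀ (i j : Fin t) (k k' : Fin s) (a : Fin ν),
      T.Adj i j → k ≠ k' → M i j k a ≠ M i j k' a) :
    ∃ φ : Fin s → Fin ν → Fin t → Fin t × Fin ν,
      (∀ k, Function.Bijective (fun p : Fin ν × Fin t => φ k p.1 p.2)) ∧
      (∀ (k : Fin s) (c : Fin ν) (i j : Fin t), T.Adj i j → G.Adj (φ k c i) (φ k c j)) ∧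
      (∀ (k k' : Fin s) (c c' : Fin ν) (i j i' j' : Fin t), k ≠ k' →
        T.Adj i j → T.Adj i' j' →
        s(φ k c i, φ k c j) ≠ s(φ k' c' i', φ k' c' j')) ∧
      ((Finset.univ.filter
          (fun x : Fin s × Fin ν × Fin t × Fin t => T.Adj x.2.2.1 x.2.2.2)).image
          (fun x => s(φ x.1 x.2.1 x.2.2.1, φ x.1 x.2.1 x.2.2.2))).card
        = s * ν * (t - 1) := by
  choose ψ hψ using fun k =>
    hT.exists_potential (α := Equiv.Perm (Fin ν)) (M · · k) fun i j _ => hsymm i j k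
  refine ⟨treeFactor ψ, treeFactor_bijective ψ, fun k c i j h => treeFactor_adj hψ hmatch h k c,
    fun k k' c c' i j i' j' hk h _ he => hk (eq_of_treeFactor_edge_eq hψ hdisj h he).1, ?_⟩
  rw [card_image_treeFactor_edges hψ hdisj, Fintype.card_fin, Fintype.card_fin,
    ← Nat.add_sub_cancel #T.edgeFinset 1, hT.card_edgeFinset, Fintype.card_fin]

/-- Let `T` be a tree on `[t]` and `G` a graph on `Fin t × Fin ν` (part `V_i` being
`{i} × Fin ν`) with edges only between parts corresponding to tree edges.  If for
every tree edge `(i,j)` the bipartite graph between `V_i` and `V_j` contains `s`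
pairwise edge-disjoint perfect matchings, then `G` contains `s` pairwise
edge-disjoint `T`-factors, covering in total `s·ν·(t-1)` edges. -/
theorem stmt_2 (t ν s : ℕ) (hν : 0 < ν) (T : SimpleGraph (Fin t)) [DecidableRel T.Adj]
    (hT : T.IsTree)
    (G : SimpleGraph (Fin t × Fin ν))
    (hbip : ∀ (i j : Fin t) (a b : Fin ν), G.Adj (i, a) (j, b) → T.Adj i j)
    (M : Fin t → Fin t → Fin s → (Fin ν ≃ Fin ν))
    (hsymm : ∀ (i j : Fin t) (k : Fin s), M j i k = (M i j k).symm)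
    (hmatch : ∀ (i j : Fin t) (k : Fin s) (a : Fin ν),
      T.Adj i j → G.Adj (i, a) (j, M i j k a))
    (hdisj : ∀ (i j : Fin t) (k k' : Fin s) (a : Fin ν),
      T.Adj i j → k ≠ k' → M i j k a ≠ M i j k' a) :
    ∃ φ : Fin s → Fin ν → Fin t → Fin t × Fin ν,
      (∀ k, Function.Bijective (fun p : Fin ν × Fin t => φ k p.1 p.2)) ∧
      (∀ (k : Fin s) (c : Fin ν) (i j : Fin t), T.Adj i j → G.Adj (φ k c i) (φ k c j)) ∧
      (∀ (k k' : Fin s) (c c' : Fin ν) (i j i' j' : Fin t), k ≠ k' →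
        T.Adj i j → T.Adj i' j' →
        s(φ k c i, φ k c j) ≠ s(φ k' c' i', φ k' c' j')) ∧
      ((Finset.univ.filter
          (fun x : Fin s × Fin ν × Fin t × Fin t => T.Adj x.2.2.1 x.2.2.2)).image
          (fun x => s(φ x.1 x.2.1 x.2.2.1, φ x.1 x.2.1 x.2.2.2))).card
        = s * ν * (t - 1) :=
  stmt_2_general t ν s T hT G M hsymm hmatch hdisj
end

section
/- Let X be a real-valued random variable on the uniform probability space of permutations of n elements, and suppose there is a constant C such that |X(σ) - X(σ')| ≤ C whenever permutations σ and σ' differ by a single transposition. Then for every t > 0, P(|X - E[X]| ≥ t) ≤ 2·exp(-2t²/(C²n)). -/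
open MeasureTheory ProbabilityTheory Finset Real
open scoped NNReal

/-!
Reveal `σ 0, σ 1, …` one value at a time: `prefixAvg k f σ`, the average of `f` over the
permutations agreeing with `σ` on the first `k` indices, is the Doob martingale of `f`. Inside a
level-`k` class, left multiplication by the transposition of the two values `σ k` and `τ k` maps
the level-`(k+1)` class of `σ` bijectively onto that of `τ`, and it moves `f` by at most `C`
because it is also a right multiplication by a transposition. Hence the martingale increments
range over an interval of length `C`, Hoeffding's lemma bounds each conditional mgf by
`exp (C² l² / 8)`, `f - 𝔼 f` is sub-Gaussian with parameter `n C² / 4`, and the Chernoff bound on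
both tails gives the inequality.
-/

/-- Discrete measurable structure on the (finite) permutation group. -/
instance permMeasurableSpace (n : ℕ) : MeasurableSpace (Equiv.Perm (Fin n)) := ⊤

lemma PMF.integral_uniformOfFintype {Ω : Type*} [Fintype Ω] [Nonempty Ω] [MeasurableSpace Ω]
    [MeasurableSingletonClass Ω] (g : Ω → ℝ) :
    ∫ x, g x ∂(PMF.uniformOfFintype Ω).toMeasure = (∑ x, g x) / Fintype.card Ω := by
  simp [PMF.integral_eq_sum, div_eq_inv_mul, mul_sum]

lemma Finset.sum_exp_mul_le_of_sum_eq_zero {α : Type*} {s : Finset α} {Y : α → ℝ} {a b : ℝ}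
    (hY : ∀ x ∈ s, Y x ∈ Set.Icc a b) (hY0 : ∑ x ∈ s, Y x = 0) (l : ℝ) :
    ∑ x ∈ s, exp (l * Y x) ≤ #s * exp ((b - a) ^ 2 * l ^ 2 / 8) := by
  rcases s.eq_empty_or_nonempty with rfl | hs
  · simp
  have : Nonempty s := hs.to_subtype
  let _ : MeasurableSpace s := ⊤
  have hmean : ∫ x, Y x ∂(PMF.uniformOfFintype s).toMeasure = 0 := by
    rw [PMF.integral_uniformOfFintype, sum_coe_sort s Y, hY0, zero_div]
  have hoeffding := (hasSubgaussianMGF_of_mem_Icc_of_integral_eq_zero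
    (measurable_of_countable (fun x : s => Y x)).aemeasurable
    (ae_of_all _ fun x => hY x x.2) hmean).mgf_le l
  have hcard : (0 : ℝ) < #s := by exact_mod_cast hs.card_pos
  rw [mgf, PMF.integral_uniformOfFintype, sum_coe_sort s (fun x => exp (l * Y x)),
    Fintype.card_coe, div_le_iff₀ hcard] at hoeffding
  refine hoeffding.trans_eq ?_
  rw [mul_comm]
  congr 2
  simp only [NNReal.coe_pow, NNReal.coe_div, coe_nnnorm, Real.norm_eq_abs, NNReal.coe_ofNat,
    div_pow, sq_abs]
  ring

lemma ProbabilityTheory.HasSubgaussianMGF.measure_abs_ge_le {Ω : Type*} [MeasurableSpace Ω]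
    {μ : Measure Ω} [IsFiniteMeasure μ] {X : Ω → ℝ} {c : ℝ≥0} (h : HasSubgaussianMGF X c μ)
    {ε : ℝ} (hε : 0 ≤ ε) :
    μ {ω | ε ≤ |X ω|} ≤ ENNReal.ofReal (2 * exp (-ε ^ 2 / (2 * c))) := by
  have hunion : {ω | ε ≤ |X ω|} = {ω | ε ≤ X ω} ∪ {ω | ε ≤ (-X) ω} := by
    ext ω; simp [le_abs]
  have htail {Y : Ω → ℝ} (hY : HasSubgaussianMGF Y c μ) :
      μ {ω | ε ≤ Y ω} ≤ ENNReal.ofReal (exp (-ε ^ 2 / (2 * c))) := by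
    rw [← ofReal_measureReal]
    exact ENNReal.ofReal_le_ofReal (hY.measure_ge_le hε)
  calc μ {ω | ε ≤ |X ω|} ≤ μ {ω | ε ≤ X ω} + μ {ω | ε ≤ (-X) ω} :=
        hunion ▸ measure_union_le _ _
    _ ≤ ENNReal.ofReal (exp (-ε ^ 2 / (2 * c))) + ENNReal.ofReal (exp (-ε ^ 2 / (2 * c))) :=
        add_le_add (htail h) (htail h.neg)
    _ = ENNReal.ofReal (2 * exp (-ε ^ 2 / (2 * c))) := by
        rw [← ENNReal.ofReal_add (exp_pos _).le (exp_pos _).le, ← two_mul]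

theorem Finset.sum_sum_div_card_eq_sum {α : Type*} (c : α → Finset α) (hself : ∀ x, x ∈ c x)
    (hc : ∀ x y, y ∈ c x → c y = c x) {P : Finset α} (hP : ∀ x ∈ P, c x ⊆ P) (g : α → ℝ) :
    ∑ x ∈ P, (∑ y ∈ c x, g y) / #(c x) = ∑ x ∈ P, g x := by
  have hsymm : ∀ x y, y ∈ c x → x ∈ c y := fun x y h => hc x y h ▸ hself x
  calc ∑ x ∈ P, (∑ y ∈ c x, g y) / #(c x)
      = ∑ x ∈ P, ∑ y ∈ c x, g y / #(c y) := by
        refine sum_congr rfl fun x _ => ?_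
        rw [sum_div]
        exact sum_congr rfl fun y hy => by rw [hc x y hy]
    _ = ∑ y ∈ P, ∑ _x ∈ c y, g y / #(c y) :=
        sum_comm' fun x y => ⟨fun ⟨hx, hy⟩ => ⟨hsymm x y hy, hP x hx hy⟩,
          fun ⟨hx, hy⟩ => ⟨hP y hy hx, hsymm y x hx⟩⟩
    _ = ∑ y ∈ P, g y := by
        refine sum_congr rfl fun y _ => ?_
        rw [sum_const, nsmul_eq_mul, mul_div_cancel₀]
        exact_mod_cast (card_pos.2 ⟨y, hself y⟩).ne'

namespace Equiv.Perm

variable {n : ℕ}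

def prefixClass (k : ℕ) (σ : Perm (Fin n)) : Finset (Perm (Fin n)) :=
  {τ | ∀ i : Fin n, (i : ℕ) < k → τ i = σ i}

@[simp]
lemma mem_prefixClass {k : ℕ} {σ τ : Perm (Fin n)} :
    τ ∈ prefixClass k σ ↔ ∀ i : Fin n, (i : ℕ) < k → τ i = σ i := by
  simp [prefixClass]

lemma mem_prefixClass_self (k : ℕ) (σ : Perm (Fin n)) : σ ∈ prefixClass k σ := by simp

lemma prefixClass_eq_of_mem {k : ℕ} {σ τ : Perm (Fin n)} (h : τ ∈ prefixClass k σ) :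
    prefixClass k τ = prefixClass k σ := by
  rw [mem_prefixClass] at h
  ext ρ
  simp only [mem_prefixClass]
  exact ⟨fun hρ i hi => (hρ i hi).trans (h i hi), fun hρ i hi => (hρ i hi).trans (h i hi).symm⟩

lemma prefixClass_succ_subset (k : ℕ) (σ : Perm (Fin n)) :
    prefixClass (k + 1) σ ⊆ prefixClass k σ := by
  intro τ
  simp only [mem_prefixClass]
  exact fun hτ i hi => hτ i (by omega)

lemma prefixClass_zero (σ : Perm (Fin n)) : prefixClass 0 σ = univ := by
  ext; simp

lemma prefixClass_n (σ : Perm (Fin n)) : prefixClass n σ = {σ} := by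
  ext τ; simp [Equiv.ext_iff]

lemma swap_mul_mem_prefixClass_succ {k : ℕ} (hk : k < n) {σ τ ρ : Perm (Fin n)}
    (hτ : τ ∈ prefixClass k σ) (hρ : ρ ∈ prefixClass (k + 1) σ) :
    swap (σ ⟨k, hk⟩) (τ ⟨k, hk⟩) * ρ ∈ prefixClass (k + 1) τ := by
  rw [mem_prefixClass] at *
  intro i hi
  rw [mul_apply, hρ i hi]
  rcases Nat.lt_succ_iff_lt_or_eq.1 hi with hi | hi
  · have hik : i ≠ ⟨k, hk⟩ := Fin.ne_of_val_ne hi.ne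
    rw [← hτ i hi]
    refine swap_apply_of_ne_of_ne ?_ (τ.injective.ne hik)
    rw [hτ i hi]
    exact σ.injective.ne hik
  · obtain rfl : i = ⟨k, hk⟩ := Fin.ext hi
    exact swap_apply_left _ _

noncomputable def prefixAvg (k : ℕ) (f : Perm (Fin n) → ℝ) (σ : Perm (Fin n)) : ℝ :=
  (∑ τ ∈ prefixClass k σ, f τ) / #(prefixClass k σ)

lemma prefixAvg_zero (f : Perm (Fin n) → ℝ) (σ : Perm (Fin n)) :
    prefixAvg 0 f σ = (∑ τ, f τ) / Fintype.card (Perm (Fin n)) := by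
  rw [prefixAvg, prefixClass_zero, card_univ]

lemma prefixAvg_n (f : Perm (Fin n) → ℝ) (σ : Perm (Fin n)) : prefixAvg n f σ = f σ := by
  simp [prefixAvg, prefixClass_n]

lemma sum_prefixAvg {m : ℕ} {P : Finset (Perm (Fin n))} (hP : ∀ σ ∈ P, prefixClass m σ ⊆ P)
    (f : Perm (Fin n) → ℝ) : ∑ σ ∈ P, prefixAvg m f σ = ∑ σ ∈ P, f σ :=
  sum_sum_div_card_eq_sum _ (mem_prefixClass_self m) (fun _ _ => prefixClass_eq_of_mem) hP f

lemma abs_prefixAvg_succ_sub_le {f : Perm (Fin n) → ℝ} {C : ℝ}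
    (hf : ∀ σ i j, |f σ - f (σ * swap i j)| ≤ C) {k : ℕ} (hk : k < n) {σ τ : Perm (Fin n)}
    (hτ : τ ∈ prefixClass k σ) :
    |prefixAvg (k + 1) f σ - prefixAvg (k + 1) f τ| ≤ C := by
  set e := swap (σ ⟨k, hk⟩) (τ ⟨k, hk⟩) with he
  have hσ : σ ∈ prefixClass k τ := prefixClass_eq_of_mem hτ ▸ mem_prefixClass_self k σ
  have hto : ∀ ρ ∈ prefixClass (k + 1) σ, e * ρ ∈ prefixClass (k + 1) τ :=
    fun _ => swap_mul_mem_prefixClass_succ hk hτ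
  have hfrom : ∀ ρ ∈ prefixClass (k + 1) τ, e * ρ ∈ prefixClass (k + 1) σ :=
    fun _ hρ => by rw [he, swap_comm]; exact swap_mul_mem_prefixClass_succ hk hσ hρ
  have hinv (s : Finset (Perm (Fin n))) : ∀ ρ ∈ s, e * (e * ρ) = ρ :=
    fun ρ _ => swap_mul_self_mul _ _ ρ
  have hcard := card_nbij' (e * ·) (e * ·) hto hfrom (hinv _) (hinv _)
  have hsum : ∑ ρ ∈ prefixClass (k + 1) τ, f ρ = ∑ ρ ∈ prefixClass (k + 1) σ, f (e * ρ) :=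
    (sum_nbij' (e * ·) (e * ·) hto hfrom (hinv _) (hinv _) fun _ _ => rfl).symm
  have hpos : (0 : ℝ) < #(prefixClass (k + 1) σ) :=
    mod_cast card_pos.2 ⟨σ, mem_prefixClass_self _ σ⟩
  rw [prefixAvg, prefixAvg, ← hcard, hsum, ← sub_div, ← sum_sub_distrib, abs_div, Nat.abs_cast,
    div_le_iff₀ hpos]
  calc |∑ ρ ∈ prefixClass (k + 1) σ, (f ρ - f (e * ρ))|
      ≤ ∑ ρ ∈ prefixClass (k + 1) σ, |f ρ - f (e * ρ)| := abs_sum_le_sum_abs _ _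
    _ ≤ ∑ _ρ ∈ prefixClass (k + 1) σ, C :=
        sum_le_sum fun ρ _ => swap_mul_eq_mul_swap ρ _ _ ▸ hf ρ _ _
    _ = C * #(prefixClass (k + 1) σ) := by rw [sum_const, nsmul_eq_mul, mul_comm]

lemma prefixAvg_exp_mul_prefixAvg_succ_le {f : Perm (Fin n) → ℝ} {C : ℝ}
    (hf : ∀ σ i j, |f σ - f (σ * swap i j)| ≤ C) {k : ℕ} (hk : k < n) (l : ℝ)
    (σ : Perm (Fin n)) :
    prefixAvg k (fun τ => exp (l * prefixAvg (k + 1) f τ)) σ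
      ≤ exp (l * prefixAvg k f σ) * exp (C ^ 2 * l ^ 2 / 8) := by
  set s := prefixClass k σ
  set Y := fun τ => prefixAvg (k + 1) f τ - prefixAvg k f σ
  have hpos : (0 : ℝ) < #s := mod_cast card_pos.2 ⟨σ, mem_prefixClass_self k σ⟩
  have hclosed : ∀ τ ∈ s, prefixClass (k + 1) τ ⊆ s := fun τ hτ =>
    (prefixClass_succ_subset k τ).trans (prefixClass_eq_of_mem hτ).subset
  have hY0 : ∑ τ ∈ s, Y τ = 0 := by
    rw [sum_sub_distrib, sum_prefixAvg hclosed, sum_const, nsmul_eq_mul, prefixAvg,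
      mul_div_cancel₀ _ hpos.ne', sub_self]
  obtain ⟨τ₀, hτ₀, hmin⟩ := s.exists_min_image Y ⟨σ, mem_prefixClass_self k σ⟩
  have hY : ∀ τ ∈ s, Y τ ∈ Set.Icc (Y τ₀) (Y τ₀ + C) := fun τ hτ => by
    have hτ' : τ ∈ prefixClass k τ₀ := by rwa [prefixClass_eq_of_mem hτ₀]
    have := abs_le.1 (abs_prefixAvg_succ_sub_le hf hk hτ')
    exact ⟨hmin τ hτ, by simp only [Y]; linarith⟩
  have hoeffding := Finset.sum_exp_mul_le_of_sum_eq_zero hY hY0 l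
  rw [add_sub_cancel_left] at hoeffding
  rw [prefixAvg, div_le_iff₀ hpos]
  calc ∑ τ ∈ s, exp (l * prefixAvg (k + 1) f τ)
      = (∑ τ ∈ s, exp (l * Y τ)) * exp (l * prefixAvg k f σ) := by
        rw [sum_mul]
        exact sum_congr rfl fun τ _ => by rw [← exp_add]; simp only [Y]; ring_nf
    _ ≤ #s * exp (C ^ 2 * l ^ 2 / 8) * exp (l * prefixAvg k f σ) := by gcongr
    _ = _ := by ring

lemma sum_exp_mul_prefixAvg_le {f : Perm (Fin n) → ℝ} {C : ℝ}
    (hf : ∀ σ i j, |f σ - f (σ * swap i j)| ≤ C) (l : ℝ) {k : ℕ} (hk : k ≤ n) :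
    ∑ σ, exp (l * prefixAvg k f σ)
      ≤ (∑ σ, exp (l * prefixAvg 0 f σ)) * exp (k * (C ^ 2 * l ^ 2 / 8)) := by
  induction k with
  | zero => simp
  | succ k ih =>
    calc ∑ σ, exp (l * prefixAvg (k + 1) f σ)
        = ∑ σ, prefixAvg k (fun τ => exp (l * prefixAvg (k + 1) f τ)) σ :=
          (sum_prefixAvg (fun _ _ => subset_univ _) _).symm
      _ ≤ ∑ σ, exp (l * prefixAvg k f σ) * exp (C ^ 2 * l ^ 2 / 8) :=
          sum_le_sum fun σ _ => prefixAvg_exp_mul_prefixAvg_succ_le hf hk l σ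
      _ ≤ (∑ σ, exp (l * prefixAvg 0 f σ)) * exp (k * (C ^ 2 * l ^ 2 / 8))
            * exp (C ^ 2 * l ^ 2 / 8) := by
          rw [← sum_mul]
          gcongr
          exact ih (by omega)
      _ = _ := by rw [mul_assoc, ← exp_add]; push_cast; ring_nf

theorem sum_exp_mul_le_of_sum_eq_zero {f : Perm (Fin n) → ℝ} {C : ℝ}
    (hf : ∀ σ i j, |f σ - f (σ * swap i j)| ≤ C) (hf0 : ∑ σ, f σ = 0) (l : ℝ) :
    ∑ σ, exp (l * f σ) ≤ Fintype.card (Perm (Fin n)) * exp (n * (C ^ 2 * l ^ 2 / 8)) := by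
  simpa [prefixAvg_n, prefixAvg_zero, hf0] using sum_exp_mul_prefixAvg_le hf l le_rfl

theorem hasSubgaussianMGF_sub_integral {f : Perm (Fin n) → ℝ} {C : ℝ}
    (hf : ∀ σ i j, |f σ - f (σ * swap i j)| ≤ C) :
    HasSubgaussianMGF (fun σ => f σ - ∫ τ, f τ ∂(PMF.uniformOfFintype (Perm (Fin n))).toMeasure)
      (n * (‖C‖₊ / 2) ^ 2) (PMF.uniformOfFintype (Perm (Fin n))).toMeasure := by
  set E := ∫ τ, f τ ∂(PMF.uniformOfFintype (Perm (Fin n))).toMeasure with hE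
  have hpos : (0 : ℝ) < Fintype.card (Perm (Fin n)) := mod_cast Fintype.card_pos
  have hg : ∀ σ i j, |(f σ - E) - (f (σ * swap i j) - E)| ≤ C := fun σ i j => by
    rw [sub_sub_sub_cancel_right]; exact hf σ i j
  have hg0 : ∑ σ, (f σ - E) = 0 := by
    rw [sum_sub_distrib, sum_const, card_univ, nsmul_eq_mul, hE, PMF.integral_uniformOfFintype,
      mul_div_cancel₀ _ hpos.ne', sub_self]
  refine ⟨fun l => Integrable.of_finite, fun l => ?_⟩
  rw [mgf, PMF.integral_uniformOfFintype, div_le_iff₀ hpos, mul_comm]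
  refine (sum_exp_mul_le_of_sum_eq_zero hg hg0 l).trans_eq ?_
  congr 2
  simp only [NNReal.coe_mul, NNReal.coe_natCast, NNReal.coe_pow, NNReal.coe_div, coe_nnnorm,
    Real.norm_eq_abs, NNReal.coe_ofNat, div_pow, sq_abs]
  ring

end Equiv.Perm

theorem stmt_4_general (n : ℕ) (X : Equiv.Perm (Fin n) → ℝ) (C : ℝ)
    (hLip : ∀ (σ : Equiv.Perm (Fin n)) (i j : Fin n),
      |X σ - X (σ * Equiv.swap i j)| ≤ C)
    (t : ℝ) (ht : 0 < t) :
    (PMF.uniformOfFintype (Equiv.Perm (Fin n))).toMeasure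
        {σ | t ≤ |X σ - ∫ σ', X σ' ∂(PMF.uniformOfFintype (Equiv.Perm (Fin n))).toMeasure|}
      ≤ ENNReal.ofReal (2 * Real.exp (-2 * t ^ 2 / (C ^ 2 * n))) := by
  refine ((Equiv.Perm.hasSubgaussianMGF_sub_integral hLip).measure_abs_ge_le ht.le).trans_eq ?_
  congr 3
  simp only [NNReal.coe_mul, NNReal.coe_natCast, NNReal.coe_pow, NNReal.coe_div, coe_nnnorm,
    Real.norm_eq_abs, NNReal.coe_ofNat, div_pow, sq_abs]
  ring

/-- McDiarmid's bounded-differences inequality on the uniform space of permutations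
of `n` elements: if `|X(σ) - X(σ')| ≤ C` whenever `σ, σ'` differ by a single
transposition, then `P(|X - E[X]| ≥ t) ≤ 2·exp(-2t²/(C²n))`. -/
theorem stmt_4 (n : ℕ) (hn : 0 < n) (X : Equiv.Perm (Fin n) → ℝ) (C : ℝ) (hC : 0 < C)
    (hLip : ∀ (σ : Equiv.Perm (Fin n)) (i j : Fin n),
      |X σ - X (σ * Equiv.swap i j)| ≤ C)
    (t : ℝ) (ht : 0 < t) :
    (PMF.uniformOfFintype (Equiv.Perm (Fin n))).toMeasure
        {σ | t ≤ |X σ - ∫ σ', X σ' ∂(PMF.uniformOfFintype (Equiv.Perm (Fin n))).toMeasure|}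
      ≤ ENNReal.ofReal (2 * Real.exp (-2 * t ^ 2 / (C ^ 2 * n))) :=
  stmt_4_general n X C hLip t ht
end

section
/- Fix a tree T on [t] and suppose the complete graph K_τ (with t | τ) admits a family of F edge-disjoint T-factors covering all but a δ-fraction of its edges. Let n = τℓ and partition [n] into τ parts V_1,...,V_τ of size ℓ. Suppose that for every pair (i,j) that is an edge in one of the T-factors of K_τ, the bipartite graph of G between V_i and V_j contains at least s pairwise edge-disjoint perfect matchings. Then G contains a family of pairwise edge-disjoint T-factors (of the n-vertex graph) covering at least s·ℓ·(t-1)·(τ/t)·F edges, where F is the number of T-factors of K_τ in the family. -/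
open SimpleGraph

namespace Stmt16

variable {t ℓ : ℕ} {T : SimpleGraph (Fin t)}

/-- Composition of the edge labels `m` along a walk. -/
def Ecomp (m : Fin t → Fin t → Fin ℓ ≃ Fin ℓ) :
    ∀ {a b : Fin t}, T.Walk a b → (Fin ℓ ≃ Fin ℓ)
  | _, _, SimpleGraph.Walk.nil => Equiv.refl _
  | _, _, @SimpleGraph.Walk.cons _ _ a c _ _ w => (m a c).trans (Ecomp m w)

theorem Ecomp_append (m : Fin t → Fin t → Fin ℓ ≃ Fin ℓ) {a b c : Fin t}
    (p : T.Walk a b) (q : T.Walk b c) :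
    Ecomp m (p.append q) = (Ecomp m p).trans (Ecomp m q) := by
  induction p with
  | nil => simp [Ecomp]
  | cons h p ih => simp [Ecomp, ih, Equiv.trans_assoc]

theorem Ecomp_concat (m : Fin t → Fin t → Fin ℓ ≃ Fin ℓ) {a b c : Fin t}
    (p : T.Walk a b) (h : T.Adj b c) :
    Ecomp m (p.concat h) = (Ecomp m p).trans (m b c) := by
  rw [SimpleGraph.Walk.concat_eq_append, Ecomp_append]
  simp [Ecomp]

theorem exists_pi (hT : T.IsTree) (r : Fin t)
    (m : Fin t → Fin t → Fin ℓ ≃ Fin ℓ) (hm : ∀ i j, m j i = (m i j).symm) :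
    ∃ π : Fin t → Fin ℓ ≃ Fin ℓ,
      ∀ i j, T.Adj i j → ∀ x, π j x = m i j (π i x) := by
  choose P hP hP' using hT.existsUnique_path r
  refine ⟨fun i => Ecomp m (P i), ?_⟩
  intro i j hij x
  show (Ecomp m (P j)) x = (m i j) ((Ecomp m (P i)) x)
  by_cases hj : j ∈ (P i).support
  · have h2 : (SimpleGraph.Walk.cons hij.symm (SimpleGraph.Walk.nil : T.Walk i i)).IsPath := by
      rw [SimpleGraph.Walk.cons_isPath_iff]
      simp [hij.ne']
    have hd : (P i).dropUntil j hj = SimpleGraph.Walk.cons hij.symm SimpleGraph.Walk.nil :=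
      (hT.existsUnique_path j i).unique ((hP i).dropUntil hj) h2
    have hq : (P i).takeUntil j hj = P j := hP' j _ ((hP i).takeUntil hj)
    have hsp : P i = (P j).append (SimpleGraph.Walk.cons hij.symm SimpleGraph.Walk.nil) := by
      rw [← hq, ← hd, SimpleGraph.Walk.take_spec]
    have hE : Ecomp m (P i) = (Ecomp m (P j)).trans ((m j i).trans (Equiv.refl _)) := by
      rw [hsp, Ecomp_append]
      simp [Ecomp]
    rw [hE]
    simp [hm i j]
  · have hpath : ((P i).concat hij).IsPath := by
      rw [← SimpleGraph.Walk.isPath_reverse_iff, SimpleGraph.Walk.reverse_concat,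
        SimpleGraph.Walk.cons_isPath_iff]
      refine ⟨(SimpleGraph.Walk.isPath_reverse_iff _).2 (hP i), ?_⟩
      simpa [SimpleGraph.Walk.support_reverse] using hj
    have hPj : (P i).concat hij = P j := hP' j _ hpath
    rw [← hPj, Ecomp_concat]
    simp

end Stmt16

/-- Bootstrapping: suppose the complete graph `K_τ` (with `t ∣ τ`) has `F`
pairwise edge-disjoint `T`-factors (given by `ψ`) covering all but a `δ`-fraction
of its edges, and let `G` be a graph on `n = τ·ℓ` vertices, partitioned into `τ`
parts `V_a = {a} × Fin ℓ`.  If for every pair of parts joined by an edge of one of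
the `T`-factors of `K_τ` the bipartite graph of `G` between them contains `s`
pairwise edge-disjoint perfect matchings, then `G` contains a family of pairwise
edge-disjoint `T`-factors covering at least `s·ℓ·(t-1)·(τ/t)·F` edges. -/
theorem stmt_16 (t τ ℓ F s : ℕ) (ht : 0 < t) (htτ : t ∣ τ) (hτ : 0 < τ) (hℓ : 0 < ℓ)
    (δ : ℝ) (hδ0 : 0 ≤ δ) (hδ1 : δ < 1)
    (T : SimpleGraph (Fin t)) [DecidableRel T.Adj] (hT : T.IsTree)
    -- the `F` edge-disjoint `T`-factors of `K_τ`
    (ψ : Fin F → Fin (τ / t) → Fin t → Fin τ)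
    (hψbij : ∀ f, Function.Bijective (fun p : Fin (τ / t) × Fin t => ψ f p.1 p.2))
    (hψdisj : ∀ (f f' : Fin F), f ≠ f' →
      ∀ (c c' : Fin (τ / t)) (i j i' j' : Fin t), T.Adj i j → T.Adj i' j' →
        s(ψ f c i, ψ f c j) ≠ s(ψ f' c' i', ψ f' c' j'))
    -- the factors cover all but a `δ`-fraction of the edges of `K_τ`
    (hψcov : ((1 - δ) * (τ.choose 2) : ℝ) ≤
      ((((Finset.univ.filter
          (fun x : Fin F × Fin (τ / t) × Fin t × Fin t => T.Adj x.2.2.1 x.2.2.2)).image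
          (fun x => s(ψ x.1 x.2.1 x.2.2.1, ψ x.1 x.2.1 x.2.2.2))).card : ℕ) : ℝ))
    -- the host graph and the matchings between covered pairs of parts
    (G : SimpleGraph (Fin τ × Fin ℓ))
    (M : Fin τ → Fin τ → Fin s → (Fin ℓ ≃ Fin ℓ))
    (hMsymm : ∀ (a b : Fin τ) (k : Fin s), M b a k = (M a b k).symm)
    (hMedge : ∀ (f : Fin F) (c : Fin (τ / t)) (i j : Fin t), T.Adj i j →
      ∀ (k : Fin s) (x : Fin ℓ),
        G.Adj (ψ f c i, x) (ψ f c j, M (ψ f c i) (ψ f c j) k x))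
    (hMdisj : ∀ (f : Fin F) (c : Fin (τ / t)) (i j : Fin t), T.Adj i j →
      ∀ (k k' : Fin s) (x : Fin ℓ), k ≠ k' →
        M (ψ f c i) (ψ f c j) k x ≠ M (ψ f c i) (ψ f c j) k' x) :
    ∃ Φ : Fin F → Fin s → Fin (τ / t) × Fin ℓ → Fin t → Fin τ × Fin ℓ,
      (∀ f k, Function.Bijective
        (fun p : (Fin (τ / t) × Fin ℓ) × Fin t => Φ f k p.1 p.2)) ∧
      (∀ (f : Fin F) (k : Fin s) (c : Fin (τ / t) × Fin ℓ) (i j : Fin t),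
        T.Adj i j → G.Adj (Φ f k c i) (Φ f k c j)) ∧
      (∀ (f f' : Fin F) (k k' : Fin s), (f, k) ≠ (f', k') →
        ∀ (c c' : Fin (τ / t) × Fin ℓ) (i j i' j' : Fin t),
          T.Adj i j → T.Adj i' j' →
          s(Φ f k c i, Φ f k c j) ≠ s(Φ f' k' c' i', Φ f' k' c' j')) ∧
      s * ℓ * (t - 1) * (τ / t) * F ≤
        ((Finset.univ.filter
            (fun x : (Fin F × Fin s) × (Fin (τ / t) × Fin ℓ) × Fin t × Fin t =>
              T.Adj x.2.2.1 x.2.2.2)).image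
            (fun x => s(Φ x.1.1 x.1.2 x.2.1 x.2.2.1, Φ x.1.1 x.1.2 x.2.1 x.2.2.2))).card := by
  classical
  choose π hπ using fun (f : Fin F) (k : Fin s) (c : Fin (τ / t)) =>
    Stmt16.exists_pi hT ⟨0, ht⟩ (fun i j => M (ψ f c i) (ψ f c j) k)
      (fun i j => hMsymm (ψ f c i) (ψ f c j) k)
  set Φ : Fin F → Fin s → Fin (τ / t) × Fin ℓ → Fin t → Fin τ × Fin ℓ :=
    fun f k p i => (ψ f p.1 i, π f k p.1 i p.2) with hΦ
  have ψinj : ∀ f (c c' : Fin (τ / t)) (i i' : Fin t), ψ f c i = ψ f c' i' →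
      c = c' ∧ i = i' := by
    intro f c c' i i' h
    simpa [Prod.ext_iff] using (hψbij f).injective (a₁ := (c, i)) (a₂ := (c', i')) h
  have hinj : ∀ f k, Function.Injective
      (fun p : (Fin (τ / t) × Fin ℓ) × Fin t => Φ f k p.1 p.2) := by
    intro f k ⟨⟨c, x⟩, i⟩ ⟨⟨c', x'⟩, i'⟩ h
    simp only [hΦ, Prod.mk.injEq] at h
    obtain ⟨hc, hi⟩ := ψinj f c c' i i' h.1
    subst hc; subst hi
    have : x = x' := (π f k c i).injective h.2
    simp [this]
  have hsurj : ∀ f k, Function.Surjective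
      (fun p : (Fin (τ / t) × Fin ℓ) × Fin t => Φ f k p.1 p.2) := by
    intro f k ⟨u, y⟩
    obtain ⟨⟨c, i⟩, hci⟩ := (hψbij f).surjective u
    exact ⟨((c, (π f k c i).symm y), i), by simp [hΦ]; exact hci⟩
  have hadj : ∀ (f : Fin F) (k : Fin s) (c : Fin (τ / t) × Fin ℓ) (i j : Fin t),
      T.Adj i j → G.Adj (Φ f k c i) (Φ f k c j) := by
    intro f k ⟨c, x⟩ i j hij
    show G.Adj (ψ f c i, π f k c i x) (ψ f c j, π f k c j x)
    rw [hπ f k c i j hij x]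
    exact hMedge f c i j hij k _
  have hdisj : ∀ (f f' : Fin F) (k k' : Fin s), (f, k) ≠ (f', k') →
      ∀ (c c' : Fin (τ / t) × Fin ℓ) (i j i' j' : Fin t),
        T.Adj i j → T.Adj i' j' →
        s(Φ f k c i, Φ f k c j) ≠ s(Φ f' k' c' i', Φ f' k' c' j') := by
    intro f f' k k' hne ⟨c, x⟩ ⟨c', x'⟩ i j i' j' hij hij' heq
    by_cases hff : f = f'
    · subst hff
      have hkk : k ≠ k' := fun h => hne (by rw [h])
      simp only [hΦ, Sym2.eq_iff, Prod.mk.injEq] at heq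
      rcases heq with ⟨⟨h1, h2⟩, h3, h4⟩ | ⟨⟨h1, h2⟩, h3, h4⟩
      · obtain ⟨hc, hi⟩ := ψinj f c c' i i' h1
        obtain ⟨-, hj⟩ := ψinj f c c' j j' h3
        subst hc; subst hi; subst hj
        apply hMdisj f c i j hij k k' (π f k c i x) hkk
        rw [← hπ f k c i j hij x, h4, hπ f k' c i j hij x', ← h2]
      · obtain ⟨hc, hi⟩ := ψinj f c c' i j' h1
        obtain ⟨-, hj⟩ := ψinj f c c' j i' h3
        subst hc; subst hi; subst hj
        -- now hij' : T.Adj j i, h2 : π f k c i x = π f k' c i x',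
        -- h4 : π f k c j x = π f k' c j x'
        apply hMdisj f c i j hij k k' (π f k c i x) hkk
        have hA : π f k' c i x' = M (ψ f c j) (ψ f c i) k' (π f k' c j x') :=
          hπ f k' c j i hij' x'
        rw [hMsymm (ψ f c i) (ψ f c j) k'] at hA
        have hB : M (ψ f c i) (ψ f c j) k' (π f k' c i x') = π f k' c j x' := by
          rw [hA, Equiv.apply_symm_apply]
        calc M (ψ f c i) (ψ f c j) k (π f k c i x)
            = π f k c j x := (hπ f k c i j hij x).symm
          _ = π f k' c j x' := h4
          _ = M (ψ f c i) (ψ f c j) k' (π f k' c i x') := hB.symm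
          _ = M (ψ f c i) (ψ f c j) k' (π f k c i x) := by rw [← h2]
    · apply hψdisj f f' hff c c' i j i' j' hij hij'
      have := congrArg (Sym2.map Prod.fst) heq
      simpa [hΦ, Sym2.map_pair_eq] using this
  refine ⟨Φ, fun f k => ⟨hinj f k, hsurj f k⟩, hadj, hdisj, ?_⟩
  have hcard : T.edgeFinset.card = t - 1 := by
    have := hT.card_edgeFinset
    simp only [Fintype.card_fin] at this
    omega
  set tgt := ((Finset.univ.filter
      (fun x : (Fin F × Fin s) × (Fin (τ / t) × Fin ℓ) × Fin t × Fin t =>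
        T.Adj x.2.2.1 x.2.2.2)).image
      (fun x => s(Φ x.1.1 x.1.2 x.2.1 x.2.2.1, Φ x.1.1 x.1.2 x.2.1 x.2.2.2))) with htgt
  have key : (Finset.univ : Finset
      ((Fin F × Fin s) × (Fin (τ / t) × Fin ℓ) × {e // e ∈ T.edgeFinset})).card ≤ tgt.card := by
    apply Finset.card_le_card_of_injOn
      (fun q => Sym2.map (Φ q.1.1 q.1.2 q.2.1) q.2.2.val)
    · rintro ⟨⟨f, k⟩, ⟨c, ⟨e, he⟩⟩⟩ -
      induction e using Sym2.ind with
      | _ i j =>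
        rw [SimpleGraph.mem_edgeFinset, SimpleGraph.mem_edgeSet] at he
        simp only [Sym2.map_pair_eq]
        exact Finset.mem_image.2 ⟨((f, k), (c, (i, j))), by simp [he], rfl⟩
    · rintro ⟨⟨f, k⟩, ⟨c, ⟨e, he⟩⟩⟩ - ⟨⟨f', k'⟩, ⟨c', ⟨e', he'⟩⟩⟩ - h
      induction e using Sym2.ind with
      | _ i j =>
      induction e' using Sym2.ind with
      | _ i' j' =>
        rw [SimpleGraph.mem_edgeFinset, SimpleGraph.mem_edgeSet] at he he'
        simp only [Sym2.map_pair_eq] at h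
        have hfk : (f, k) = (f', k') := by
          by_contra hne
          exact hdisj f f' k k' hne c c' i j i' j' he he' h
        obtain ⟨hf, hk⟩ := Prod.ext_iff.1 hfk
        simp only at hf hk
        subst hf; subst hk
        rw [Sym2.eq_iff] at h
        rcases h with ⟨h1, h2⟩ | ⟨h1, h2⟩
        · have e1 : ((c, i) : (Fin (τ / t) × Fin ℓ) × Fin t) = (c', i') :=
            hinj f k h1
          have e2 : ((c, j) : (Fin (τ / t) × Fin ℓ) × Fin t) = (c', j') :=
            hinj f k h2
          simp only [Prod.mk.injEq] at e1 e2
          simp [Prod.ext_iff, Subtype.ext_iff, e1.1, e1.2, e2.2]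
        · have e1 : ((c, i) : (Fin (τ / t) × Fin ℓ) × Fin t) = (c', j') :=
            hinj f k h1
          have e2 : ((c, j) : (Fin (τ / t) × Fin ℓ) × Fin t) = (c', i') :=
            hinj f k h2
          simp only [Prod.mk.injEq] at e1 e2
          simp [Prod.ext_iff, Subtype.ext_iff, e1.1, e1.2, e2.2, Sym2.eq_swap]
  calc s * ℓ * (t - 1) * (τ / t) * F
      = (Finset.univ : Finset
        ((Fin F × Fin s) × (Fin (τ / t) × Fin ℓ) × {e // e ∈ T.edgeFinset})).card := by
        rw [Finset.card_univ]
        simp only [Fintype.card_prod, Fintype.card_fin, Fintype.card_coe, hcard]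
        ring
    _ ≤ tgt.card := key
end
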